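/- Invariance of the residue under change of variables: let A be a commutative ℚ-algebra, let f be a formal series at infinity over A, and let u(ζ) = ζ + (terms of degree ≤ 0) be a formal series at infinity with leading term ζ (so u is invertible for composition). Then [z^{-1}] f(z) = [ζ^{-1}] ( u'(ζ) · f(u(ζ)) ), where f(u(ζ)) := Σ_{r≥0} (u(ζ) - ζ)^r / r! · f^{(r)}(ζ) is the well-defined formal composition. -/

import Mathlib

noncomputable section

variable {A : Type*}

/-- The formal derivative `d/dz` of a formal series at infinity. A series at infinity
`f(z) = Σ_{n ≤ N} a_n z^n` is modeled as a `LaurentSeries` in the variable `w = 1/z`,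
so that the coefficient of `z^n` is `f.coeff (-n)`; the derivative satisfies
`(derivZ f).coeff m = (1 - m) • f.coeff (m - 1)`. -/
noncomputable def derivZ [CommRing A] (f : LaurentSeries A) : LaurentSeries A where
  coeff m := (1 - m) • f.coeff (m - 1)
  isPWO_support' := by
    refine (f.isPWO_support.image_of_monotone (f := fun n => n + 1)
      (fun a b hab => by simpa using hab)).mono ?_
    intro m hm
    have hf : f.coeff (m - 1) ≠ 0 := by
      intro h
      simp [Function.mem_support, h] at hm
    exact ⟨m - 1, by simpa [HahnSeries.mem_support] using hf, by ring⟩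

/-- `IsSumOf g F` asserts that the formal series at infinity `g` is the coefficientwise
convergent sum `Σ_{r ≥ 0} F r`: for each coefficient, the partial sums eventually stabilize. -/
def IsSumOf [CommRing A] (g : LaurentSeries A) (F : ℕ → LaurentSeries A) : Prop :=
  ∀ m : ℤ, ∃ N : ℕ, ∀ n : ℕ, N ≤ n → g.coeff m = (∑ r ∈ Finset.range n, F r).coeff m

/-!
Write `v = u - ζ` and `T r = v ^ r f⁽ʳ⁾ / r!`, so that `f ∘ u = Σ T r` and `u' = 1 + v'`.
Differentiating `v ^ (r + 1) f⁽ʳ⁾ / (r + 1)!` and using that derivatives have no residue gives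
`res (v' T r) = -res (T (r + 1))`, so `res (u' Σ_{r < n} T r)` telescopes to `res f - res (T n)`.
Every `T r` has order at least that of `f`, so the residue of `u' (f ∘ u)` only involves finitely
many coefficients of `f ∘ u` and equals that of `u'` times a partial sum; the remaining
`res (T n)` vanishes for large `n` because the partial sums stabilise.
-/

open HahnSeries

theorem HahnSeries.order_le_orderTop {Γ R : Type*} [Zero Γ] [LinearOrder Γ] [Zero R]
    (x : HahnSeries Γ R) : (x.order : WithTop Γ) ≤ x.orderTop :=
  le_orderTop_iff_forall.2 fun _ hj => coeff_eq_zero_of_lt_order (WithTop.coe_lt_coe.1 hj)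

theorem HahnSeries.le_orderTop_sum {Γ R ι : Type*} [LinearOrder Γ] [AddCommMonoid R]
    {c : WithTop Γ} (s : Finset ι) {F : ι → HahnSeries Γ R}
    (hF : ∀ i ∈ s, c ≤ (F i).orderTop) : c ≤ (∑ i ∈ s, F i).orderTop :=
  le_orderTop_iff_forall.2 fun j hj => by
    rw [coeff_sum]
    exact Finset.sum_eq_zero fun i hi => coeff_eq_zero_of_lt_orderTop (hj.trans_le (hF i hi))

section Derivatives

variable [CommRing A]

def eulerOp (f : LaurentSeries A) : LaurentSeries A where
  coeff m := m • f.coeff m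
  isPWO_support' :=
    f.isPWO_support.mono (Function.support_smul_subset_right (fun m : ℤ => m) _)

theorem eulerOp_coeff (f : LaurentSeries A) (m : ℤ) : (eulerOp f).coeff m = m • f.coeff m := rfl

theorem support_eulerOp_subset (f : LaurentSeries A) : (eulerOp f).support ⊆ f.support :=
  Function.support_smul_subset_right (fun m : ℤ => m) _

theorem eulerOp_mul (a b : LaurentSeries A) :
    eulerOp (a * b) = eulerOp a * b + a * eulerOp b := by
  ext m
  rw [coeff_add, coeff_mul_left' a.isPWO_support (support_eulerOp_subset a),
    coeff_mul_right' b.isPWO_support (support_eulerOp_subset b), eulerOp_coeff, coeff_mul,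
    Finset.smul_sum, ← Finset.sum_add_distrib]
  refine Finset.sum_congr rfl fun ij hij => ?_
  rw [← (Finset.mem_antidiagonal.1 hij).2.2, eulerOp_coeff, eulerOp_coeff, add_smul,
    smul_mul_assoc, mul_smul_comm]

theorem derivZ_coeff (f : LaurentSeries A) (m : ℤ) :
    (derivZ f).coeff m = (1 - m) • f.coeff (m - 1) := rfl

/-- In the coordinate `w = 1 / z` one has `d/dz = -w ^ 2 d/dw = -w · (w d/dw)`. -/
theorem derivZ_eq_neg_single_mul_eulerOp (f : LaurentSeries A) :
    derivZ f = -(single 1 1 * eulerOp f) := by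
  ext m
  obtain ⟨k, rfl⟩ : ∃ k, m = k + 1 := ⟨m - 1, by ring⟩
  rw [derivZ_coeff, coeff_neg, coeff_single_mul_add, one_mul, eulerOp_coeff,
    add_sub_cancel_right, ← neg_smul]
  congr 1
  ring

theorem derivZ_add (a b : LaurentSeries A) : derivZ (a + b) = derivZ a + derivZ b := by
  ext m
  simp only [derivZ_coeff, coeff_add, smul_add]

theorem derivZ_mul (a b : LaurentSeries A) :
    derivZ (a * b) = derivZ a * b + a * derivZ b := by
  simp only [derivZ_eq_neg_single_mul_eulerOp, eulerOp_mul]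
  ring

theorem derivZ_pow_succ (a : LaurentSeries A) (n : ℕ) :
    derivZ (a ^ (n + 1)) = (n + 1) • (a ^ n * derivZ a) := by
  induction n with
  | zero => simp
  | succ n ih =>
    rw [pow_succ, derivZ_mul, ih, succ_nsmul _ (n + 1)]
    ring

theorem derivZ_single_neg_one : derivZ (single (-1 : ℤ) (1 : A)) = 1 := by
  ext m
  rcases eq_or_ne m 0 with rfl | hm
  · simp [derivZ_coeff]
  · simp [derivZ_coeff, hm, show m - 1 ≠ -1 by omega]

theorem coeff_one_derivZ (x : LaurentSeries A) : (derivZ x).coeff 1 = 0 := by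
  simp [derivZ_coeff]

theorem orderTop_le_orderTop_derivZ (x : LaurentSeries A) :
    x.orderTop ≤ (derivZ x).orderTop :=
  le_orderTop_iff_forall.2 fun j hj => by
    rw [derivZ_coeff,
      coeff_eq_zero_of_lt_orderTop ((WithTop.coe_le_coe.2 (by omega)).trans_lt hj), smul_zero]

theorem orderTop_le_orderTop_iterate_derivZ (x : LaurentSeries A) (r : ℕ) :
    x.orderTop ≤ (derivZ^[r] x).orderTop := by
  induction r with
  | zero => rfl
  | succ r ih =>
    rw [Function.iterate_succ_apply']
    exact ih.trans (orderTop_le_orderTop_derivZ _)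

theorem derivZ_smul [Module ℚ A] (q : ℚ) (x : LaurentSeries A) :
    derivZ (q • x) = q • derivZ x := by
  ext m
  simp only [derivZ_coeff, coeff_smul]
  exact smul_comm _ _ _

end Derivatives

section Taylor

variable [CommRing A] [Algebra ℚ A]

def taylorTerm (v f : LaurentSeries A) (r : ℕ) : LaurentSeries A :=
  ((Nat.factorial r : ℚ))⁻¹ • (v ^ r * derivZ^[r] f)

theorem taylorTerm_zero (v f : LaurentSeries A) : taylorTerm v f 0 = f := by
  simp [taylorTerm]

theorem derivZ_mul_taylorTerm_add_taylorTerm_succ (v f : LaurentSeries A) (r : ℕ) :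
    derivZ v * taylorTerm v f r + taylorTerm v f (r + 1) =
      derivZ (((Nat.factorial (r + 1) : ℚ))⁻¹ • (v ^ (r + 1) * derivZ^[r] f)) := by
  have hfac : ((Nat.factorial (r + 1) : ℚ))⁻¹ * (r + 1) = ((Nat.factorial r : ℚ))⁻¹ := by
    rw [Nat.factorial_succ, Nat.cast_mul, Nat.cast_succ, mul_inv, mul_comm, ← mul_assoc,
      mul_inv_cancel₀ (by positivity), one_mul]
  rw [derivZ_smul, derivZ_mul, derivZ_pow_succ, ← Function.iterate_succ_apply' derivZ, smul_add,
    taylorTerm, taylorTerm, ← hfac, mul_smul]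
  congr 1
  rw [mul_smul_comm, mul_smul_comm, smul_mul_assoc, ← Nat.cast_smul_eq_nsmul ℚ, Nat.cast_succ]
  congr 2
  ring

theorem coeff_one_derivZ_mul_taylorTerm (v f : LaurentSeries A) (r : ℕ) :
    (derivZ v * taylorTerm v f r).coeff 1 = -(taylorTerm v f (r + 1)).coeff 1 := by
  have h := coeff_one_derivZ (((Nat.factorial (r + 1) : ℚ))⁻¹ • (v ^ (r + 1) * derivZ^[r] f))
  rw [← derivZ_mul_taylorTerm_add_taylorTerm_succ, coeff_add] at h
  exact eq_neg_of_add_eq_zero_left h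

theorem coeff_one_mul_sum_taylorTerm (v f : LaurentSeries A) (n : ℕ) :
    ((1 + derivZ v) * ∑ r ∈ Finset.range n, taylorTerm v f r).coeff 1 =
      f.coeff 1 - (taylorTerm v f n).coeff 1 := by
  simp only [Finset.mul_sum, coeff_sum, add_mul, one_mul, coeff_add,
    coeff_one_derivZ_mul_taylorTerm, ← sub_eq_add_neg]
  rw [Finset.sum_range_sub', taylorTerm_zero]

theorem orderTop_le_orderTop_taylorTerm {v : LaurentSeries A} (hv : 0 ≤ v.orderTop)
    (f : LaurentSeries A) (r : ℕ) : f.orderTop ≤ (taylorTerm v f r).orderTop :=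
  calc f.orderTop ≤ r • v.orderTop + (derivZ^[r] f).orderTop :=
        le_add_of_nonneg_of_le (nsmul_nonneg hv r) (orderTop_le_orderTop_iterate_derivZ f r)
    _ ≤ (v ^ r).orderTop + (derivZ^[r] f).orderTop :=
        add_le_add orderTop_nsmul_le_orderTop_pow le_rfl
    _ ≤ (v ^ r * derivZ^[r] f).orderTop := orderTop_add_le_mul
    _ ≤ (taylorTerm v f r).orderTop := not_lt.1 (orderTop_smul_not_lt _ _)

end Taylor

section IsSumOf

variable [CommRing A] {g : LaurentSeries A} {F : ℕ → LaurentSeries A}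

theorem IsSumOf.exists_coeff_eq_zero (hg : IsSumOf g F) (m : ℤ) :
    ∃ N, ∀ n, N ≤ n → (F n).coeff m = 0 := by
  obtain ⟨N, hN⟩ := hg m
  refine ⟨N, fun n hn => ?_⟩
  have h := (hN n hn).symm.trans (hN (n + 1) (hn.trans n.le_succ))
  rwa [Finset.sum_range_succ, coeff_add, left_eq_add] at h

theorem IsSumOf.le_orderTop {c : WithTop ℤ} (hg : IsSumOf g F)
    (hF : ∀ r, c ≤ (F r).orderTop) : c ≤ g.orderTop :=
  le_orderTop_iff_forall.2 fun j hj => by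
    obtain ⟨N, hN⟩ := hg j
    rw [hN N le_rfl]
    exact coeff_eq_zero_of_lt_orderTop (hj.trans_le (le_orderTop_sum _ fun r _ => hF r))

theorem IsSumOf.mul_left (x : LaurentSeries A) {c : ℤ}
    (hF : ∀ r, (c : WithTop ℤ) ≤ (F r).orderTop) (hg : IsSumOf g F) :
    IsSumOf (x * g) (fun r => x * F r) := by
  intro m
  have hgc := hg.le_orderTop hF
  choose N hN using hg
  -- Below `c` all partial sums and `g` vanish, and `x` vanishes below `x.order`, so the
  -- coefficient of `w ^ m` only sees the coefficients of `g` of index in `[c, m - x.order]`.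
  refine ⟨(Finset.Ico c (m - x.order + 1)).sup N, fun n hn => ?_⟩
  rw [← Finset.mul_sum, ← sub_eq_zero, ← coeff_sub, ← mul_sub]
  have hdiff :
      ((m - x.order + 1 : ℤ) : WithTop ℤ) ≤ (g - ∑ r ∈ Finset.range n, F r).orderTop :=
    le_orderTop_iff_forall.2 fun j hj => by
      rw [coeff_sub, sub_eq_zero]
      by_cases hjc : j < c
      · rw [coeff_eq_zero_of_lt_orderTop ((WithTop.coe_lt_coe.2 hjc).trans_le hgc),
          coeff_eq_zero_of_lt_orderTop
            ((WithTop.coe_lt_coe.2 hjc).trans_le (le_orderTop_sum _ fun r _ => hF r))]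
      · refine hN j n ((Finset.le_sup (Finset.mem_Ico.2 ⟨?_, ?_⟩)).trans hn)
        · omega
        · exact WithTop.coe_lt_coe.1 hj
  refine coeff_eq_zero_of_lt_orderTop ?_
  calc (m : WithTop ℤ) < ((x.order + (m - x.order + 1) : ℤ) : WithTop ℤ) := by
        norm_cast; omega
    _ ≤ x.orderTop + (g - ∑ r ∈ Finset.range n, F r).orderTop := by
      rw [WithTop.coe_add]; exact add_le_add x.order_le_orderTop hdiff
    _ ≤ _ := orderTop_add_le_mul

end IsSumOf

/-- Invariance of the residue under change of variables: if `f` is a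
formal series at infinity over a commutative `ℚ`-algebra `A` and `u(ζ) = ζ + v(ζ)` with
`v` of degree `≤ 0` (no coefficients of `z^n` with `n ≥ 1`; in `w = 1/z` coordinates,
`(u - ζ).coeff m = 0` for `m < 0`), and `g = f ∘ u = Σ_{r≥0} v^r/r! · f^{(r)}` is the
formal composition, then `[z^{-1}] f = [ζ^{-1}] (u' · f(u(ζ)))`.
(The residue `[z^{-1}]` is the coefficient of `w^1`.) -/
theorem residue_change_of_variables [CommRing A] [Algebra ℚ A]
    (f u g : LaurentSeries A)
    (hu : ∀ m : ℤ, m < 0 → (u - HahnSeries.single (-1) 1).coeff m = 0)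
    (hg : IsSumOf g (fun r => ((Nat.factorial r : ℚ))⁻¹ •
      ((u - HahnSeries.single (-1) 1) ^ r * derivZ^[r] f))) :
    f.coeff 1 = (derivZ u * g).coeff 1 := by
  set v := u - single (-1) 1
  replace hg : IsSumOf g (taylorTerm v f) := hg
  have hDu : derivZ u = 1 + derivZ v := by
    rw [← derivZ_single_neg_one, ← derivZ_add, add_sub_cancel]
  have hv : 0 ≤ v.orderTop :=
    le_orderTop_iff_forall.2 fun j hj => hu j (WithTop.coe_lt_coe.1 hj)
  have hF (r : ℕ) : (f.order : WithTop ℤ) ≤ (taylorTerm v f r).orderTop :=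
    f.order_le_orderTop.trans (orderTop_le_orderTop_taylorTerm hv f r)
  obtain ⟨N₁, hN₁⟩ := hg.mul_left (derivZ u) hF 1
  obtain ⟨N₂, hN₂⟩ := hg.exists_coeff_eq_zero 1
  let n := max N₁ N₂
  calc f.coeff 1 = f.coeff 1 - (taylorTerm v f n).coeff 1 := by
        rw [hN₂ n (le_max_right _ _), sub_zero]
    _ = ((1 + derivZ v) * ∑ r ∈ Finset.range n, taylorTerm v f r).coeff 1 :=
        (coeff_one_mul_sum_taylorTerm v f n).symm
    _ = (derivZ u * g).coeff 1 := by rw [hN₁ n (le_max_left _ _), Finset.mul_sum, hDu]
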